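/- arXiv:2507.13961 — 4 statements merged into one kernel-verified Lean document; each statement's English description precedes it below -/
import Mathlib

section
/- The MAN array is a valid PDA: for K users and parameter t ∈ [1, K-1], define an array P whose rows are indexed by t-subsets T of [K] and columns by k ∈ [K], with P(T,k) = * if k ∈ T, and P(T,k) = S where S = T ∪ {k} (a (t+1)-subset) if k ∉ T. Then: (1) each column contains exactly C(K-1,t-1) stars; (2) if P(T₁,k₁) = P(T₂,k₂) = S with (T₁,k₁) ≠ (T₂,k₂) both non-star, then T₁ ≠ T₂, k₁ ≠ k₂, and P(T₁,k₂) = P(T₂,k₁) = *. -/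
/-- The MAN array is a valid PDA. Rows are indexed by `t`-subsets `T` of `[K]`, columns by
`k ∈ [K]`; the entry is a star iff `k ∈ T`, and otherwise is labeled by the `(t+1)`-subset
`T ∪ {k}`.
(1) each column contains exactly `C(K-1, t-1)` stars;
(2) two equal non-star labels lie in distinct rows and distinct columns, and the two cross
positions are stars. -/
theorem man_array_is_PDA (K t : ℕ) (ht : 1 ≤ t) (htK : t ≤ K - 1) :
    (∀ k : Fin K,
      ((Finset.univ : Finset (Finset (Fin K))).filter
        (fun T => T.card = t ∧ k ∈ T)).card = Nat.choose (K - 1) (t - 1)) ∧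
    (∀ (T₁ T₂ : Finset (Fin K)) (k₁ k₂ : Fin K),
      T₁.card = t → T₂.card = t → k₁ ∉ T₁ → k₂ ∉ T₂ → (T₁, k₁) ≠ (T₂, k₂) →
      insert k₁ T₁ = insert k₂ T₂ →
      T₁ ≠ T₂ ∧ k₁ ≠ k₂ ∧ k₂ ∈ T₁ ∧ k₁ ∈ T₂) := by
  constructor
  · intro k
    have h : ((Finset.univ : Finset (Finset (Fin K))).filter
        (fun T => T.card = t ∧ k ∈ T))
        = ((Finset.univ.erase k).powersetCard (t - 1)).image (insert k) := by
      ext T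
      simp only [Finset.mem_filter, Finset.mem_univ, true_and, Finset.mem_image,
        Finset.mem_powersetCard]
      constructor
      · rintro ⟨hc, hk⟩
        refine ⟨T.erase k, ⟨?_, ?_⟩, ?_⟩
        · intro x hx
          rw [Finset.mem_erase] at hx ⊢
          exact ⟨hx.1, Finset.mem_univ x⟩
        · rw [Finset.card_erase_of_mem hk, hc]
        · exact Finset.insert_erase hk
      · rintro ⟨A, ⟨hA, hAc⟩, rfl⟩
        have hkA : k ∉ A := fun h => (Finset.mem_erase.mp (hA h)).1 rfl
        refine ⟨?_, Finset.mem_insert_self _ _⟩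
        rw [Finset.card_insert_of_notMem hkA, hAc]
        omega
    rw [h, Finset.card_image_of_injOn, Finset.card_powersetCard,
      Finset.card_erase_of_mem (Finset.mem_univ k), Finset.card_univ, Fintype.card_fin]
    intro A hA B hB hAB
    rw [Finset.mem_coe, Finset.mem_powersetCard] at hA hB
    have hkA : k ∉ A := fun h => (Finset.mem_erase.mp (hA.1 h)).1 rfl
    have hkB : k ∉ B := fun h => (Finset.mem_erase.mp (hB.1 h)).1 rfl
    rw [← Finset.erase_insert hkA, ← Finset.erase_insert hkB, hAB]
  · intro T₁ T₂ k₁ k₂ h₁ h₂ hk₁ hk₂ hne hins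
    have hTne : T₁ ≠ T₂ := by
      rintro rfl
      have : k₁ ∈ insert k₂ T₁ := hins ▸ Finset.mem_insert_self k₁ T₁
      rcases Finset.mem_insert.mp this with h | h
      · exact hne (by rw [h])
      · exact hk₁ h
    have hkne : k₁ ≠ k₂ := by
      rintro rfl
      apply hTne
      rw [← Finset.erase_insert hk₁, ← Finset.erase_insert hk₂, hins]
    refine ⟨hTne, hkne, ?_, ?_⟩
    · have : k₂ ∈ insert k₁ T₁ := hins ▸ Finset.mem_insert_self k₂ T₂
      rcases Finset.mem_insert.mp this with h | h
      · exact absurd h.symm hkne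
      · exact h
    · have : k₁ ∈ insert k₂ T₂ := hins ▸ Finset.mem_insert_self k₁ T₁
      rcases Finset.mem_insert.mp this with h | h
      · exact absurd h hkne
      · exact h
end

section
/- In any (m,n) non-perfect secret sharing scheme for a secret W of size B bits (with all shares of equal size), each share has size at least B/(n-m) bits. Formally: if S_1,…,S_n are random variables each with entropy at most L, I(W; any m of them) = 0, and H(W | S_1,…,S_n) = 0, then L ≥ H(W)/(n-m). -/
/-- The probability that the random variable `X` (on a finite sample space with
probability mass function `p`) takes the value `a`. -/
noncomputable def prob {Ω : Type*} [Fintype Ω] (p : Ω → ℝ) {α : Type*} [DecidableEq α]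
    (X : Ω → α) (a : α) : ℝ :=
  ∑ ω ∈ Finset.univ.filter (fun ω => X ω = a), p ω

/-- Shannon entropy (in bits) of a finitely-valued random variable, with the
convention `0 * log 0 = 0`. -/
noncomputable def ent {Ω : Type*} [Fintype Ω] (p : Ω → ℝ) {α : Type*} [Fintype α]
    [DecidableEq α] (X : Ω → α) : ℝ :=
  -∑ a : α, prob p X a * Real.logb 2 (prob p X a)

/-- Shannon mutual information `I(X;Y) = H(X) + H(Y) - H(X,Y)`. -/
noncomputable def mutInfo {Ω : Type*} [Fintype Ω] (p : Ω → ℝ) {α β : Type*}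
    [Fintype α] [DecidableEq α] [Fintype β] [DecidableEq β]
    (X : Ω → α) (Y : Ω → β) : ℝ :=
  ent p X + ent p Y - ent p (fun ω => (X ω, Y ω))

/-- Conditional Shannon entropy `H(X | Y) = H(X,Y) - H(Y)`. -/
noncomputable def condEnt {Ω : Type*} [Fintype Ω] (p : Ω → ℝ) {α β : Type*}
    [Fintype α] [DecidableEq α] [Fintype β] [DecidableEq β]
    (X : Ω → α) (Y : Ω → β) : ℝ :=
  ent p (fun ω => (X ω, Y ω)) - ent p Y

section aux
variable {Ω : Type*} [Fintype Ω] (p : Ω → ℝ)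

lemma prob_nonneg (hp0 : ∀ ω, 0 ≤ p ω) {α : Type*} [DecidableEq α] (X : Ω → α) (a : α) :
    0 ≤ prob p X a :=
  Finset.sum_nonneg fun ω _ => hp0 ω

lemma sum_prob {α : Type*} [Fintype α] [DecidableEq α] (X : Ω → α) :
    ∑ a, prob p X a = ∑ ω, p ω :=
  Finset.sum_fiberwise Finset.univ X p

lemma prob_comp {α β : Type*} [Fintype α] [DecidableEq α] [DecidableEq β]
    (f : α → β) (X : Ω → α) (b : β) :
    prob p (fun ω => f (X ω)) b = ∑ a ∈ Finset.univ.filter (fun a => f a = b), prob p X a := by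
  classical
  unfold prob
  rw [← Finset.sum_fiberwise_of_maps_to (fun ω (_ : ω ∈ Finset.univ.filter (fun ω => f (X ω) = b)) => Finset.mem_univ (X ω)) p]
  rw [Finset.sum_filter]
  refine Finset.sum_congr rfl fun a _ => ?_
  by_cases h : f a = b
  · rw [if_pos h]
    refine Finset.sum_congr ?_ fun _ _ => rfl
    ext ω
    simp only [Finset.mem_filter, Finset.mem_univ, true_and]
    constructor
    · rintro ⟨_, h2⟩; exact h2
    · intro h2; exact ⟨by rw [h2, h], h2⟩
  · rw [if_neg h]
    apply Finset.sum_eq_zero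
    intro ω hω
    simp only [Finset.mem_filter, Finset.mem_univ, true_and] at hω
    exact absurd (hω.2 ▸ hω.1) h

lemma ent_comp_le (hp0 : ∀ ω, 0 ≤ p ω) {α β : Type*} [Fintype α] [DecidableEq α]
    [Fintype β] [DecidableEq β] (f : α → β) (X : Ω → α) :
    ent p (fun ω => f (X ω)) ≤ ent p X := by
  unfold ent
  rw [neg_le_neg_iff]
  have key : ∑ b, prob p (fun ω => f (X ω)) b * Real.logb 2 (prob p (fun ω => f (X ω)) b)
      = ∑ a, prob p X a * Real.logb 2 (prob p (fun ω => f (X ω)) (f a)) := by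
    rw [← Finset.sum_fiberwise Finset.univ f
      (fun a => prob p X a * Real.logb 2 (prob p (fun ω => f (X ω)) (f a)))]
    refine Finset.sum_congr rfl fun b _ => ?_
    rw [Finset.sum_congr rfl (fun a ha => by
      rw [(Finset.mem_filter.1 ha).2] :
      ∀ a ∈ Finset.univ.filter (fun a => f a = b),
        prob p X a * Real.logb 2 (prob p (fun ω => f (X ω)) (f a))
          = prob p X a * Real.logb 2 (prob p (fun ω => f (X ω)) b)),
      ← Finset.sum_mul, ← prob_comp]
  rw [key]
  refine Finset.sum_le_sum fun a _ => ?_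
  rcases eq_or_lt_of_le (prob_nonneg p hp0 X a) with h | h
  · rw [← h]; simp
  · have hle : prob p X a ≤ prob p (fun ω => f (X ω)) (f a) := by
      rw [prob_comp p f X]
      exact Finset.single_le_sum (fun a' _ => prob_nonneg p hp0 X a')
        (Finset.mem_filter.2 ⟨Finset.mem_univ a, rfl⟩)
    exact mul_le_mul_of_nonneg_left (Real.logb_le_logb_of_le one_lt_two h hle) h.le

lemma prob_fst {α β : Type*} [Fintype α] [DecidableEq α]
    [Fintype β] [DecidableEq β] (X : Ω → α) (Y : Ω → β) (a : α) :
    prob p X a = ∑ b, prob p (fun ω => (X ω, Y ω)) (a, b) := by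
  have h := prob_comp p Prod.fst (fun ω => (X ω, Y ω)) a
  rw [show (fun ω => ((X ω, Y ω) : α × β).1) = X from rfl] at h
  rw [h, Finset.sum_filter, Fintype.sum_prod_type]
  rw [Finset.sum_eq_single a]
  · simp
  · intro b _ hb; simp [hb]
  · intro h; exact absurd (Finset.mem_univ a) h

lemma prob_snd {α β : Type*} [Fintype α] [DecidableEq α]
    [Fintype β] [DecidableEq β] (X : Ω → α) (Y : Ω → β) (b : β) :
    prob p Y b = ∑ a, prob p (fun ω => (X ω, Y ω)) (a, b) := by
  have h := prob_comp p Prod.snd (fun ω => (X ω, Y ω)) b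
  rw [show (fun ω => ((X ω, Y ω) : α × β).2) = Y from rfl] at h
  rw [h, Finset.sum_filter, Fintype.sum_prod_type_right]
  rw [Finset.sum_eq_single b]
  · simp
  · intro c _ hc; simp [hc]
  · intro h; exact absurd (Finset.mem_univ b) h


lemma ent_pair_le (hp0 : ∀ ω, 0 ≤ p ω) (hp1 : ∑ ω, p ω = 1) {α β : Type*}
    [Fintype α] [DecidableEq α] [Fintype β] [DecidableEq β] (X : Ω → α) (Y : Ω → β) :
    ent p (fun ω => (X ω, Y ω)) ≤ ent p X + ent p Y := by
  set q : α × β → ℝ := prob p (fun ω => (X ω, Y ω)) with hq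
  have hq0 : ∀ c, 0 ≤ q c := fun c => prob_nonneg p hp0 _ c
  have hA : ∀ a, prob p X a = ∑ b, q (a, b) := fun a => prob_fst p X Y a
  have hB : ∀ b, prob p Y b = ∑ a, q (a, b) := fun b => prob_snd p X Y b
  have hA0 : ∀ a, 0 ≤ prob p X a := fun a => prob_nonneg p hp0 X a
  have hB0 : ∀ b, 0 ≤ prob p Y b := fun b => prob_nonneg p hp0 Y b
  have expandA : ∑ a, prob p X a * Real.logb 2 (prob p X a)
      = ∑ c : α × β, q c * Real.logb 2 (prob p X c.1) := by
    rw [Fintype.sum_prod_type]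
    refine Finset.sum_congr rfl fun a _ => ?_
    nth_rewrite 1 [hA a]
    rw [Finset.sum_mul]
  have expandB : ∑ b, prob p Y b * Real.logb 2 (prob p Y b)
      = ∑ c : α × β, q c * Real.logb 2 (prob p Y c.2) := by
    rw [Fintype.sum_prod_type_right]
    refine Finset.sum_congr rfl fun b _ => ?_
    nth_rewrite 1 [hB b]
    rw [Finset.sum_mul]
  have key : ∀ c : α × β,
      q c * Real.logb 2 (prob p X c.1) + q c * Real.logb 2 (prob p Y c.2)
        - q c * Real.logb 2 (q c)
      ≤ (prob p X c.1 * prob p Y c.2 - q c) / Real.log 2 := by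
    intro c
    rcases eq_or_lt_of_le (hq0 c) with h | h
    · rw [← h]
      simp only [zero_mul, add_zero, sub_zero]
      exact div_nonneg (mul_nonneg (hA0 _) (hB0 _)) (Real.log_nonneg one_le_two)
    · have hqA : 0 < prob p X c.1 := lt_of_lt_of_le h (by
        rw [hA]
        exact Finset.single_le_sum (fun b _ => hq0 (c.1, b)) (Finset.mem_univ c.2))
      have hqB : 0 < prob p Y c.2 := lt_of_lt_of_le h (by
        rw [hB]
        exact Finset.single_le_sum (fun a _ => hq0 (a, c.2)) (Finset.mem_univ c.1))
      have hlog2 : (0:ℝ) < Real.log 2 := Real.log_pos one_lt_two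
      have hlogs : Real.log (prob p X c.1) + Real.log (prob p Y c.2) - Real.log (q c)
          = Real.log (prob p X c.1 * prob p Y c.2 / q c) := by
        rw [Real.log_div (by positivity) (ne_of_gt h), Real.log_mul (ne_of_gt hqA) (ne_of_gt hqB)]
      have hineq : q c * (Real.log (prob p X c.1) + Real.log (prob p Y c.2) - Real.log (q c))
          ≤ prob p X c.1 * prob p Y c.2 - q c := by
        rw [hlogs]
        have h1 : Real.log (prob p X c.1 * prob p Y c.2 / q c)
            ≤ prob p X c.1 * prob p Y c.2 / q c - 1 :=
          Real.log_le_sub_one_of_pos (by positivity)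
        have h2 := mul_le_mul_of_nonneg_left h1 (le_of_lt h)
        calc q c * Real.log (prob p X c.1 * prob p Y c.2 / q c)
            ≤ q c * (prob p X c.1 * prob p Y c.2 / q c - 1) := h2
          _ = prob p X c.1 * prob p Y c.2 - q c := by
              field_simp
      simp only [Real.logb]
      calc q c * (Real.log (prob p X c.1) / Real.log 2)
            + q c * (Real.log (prob p Y c.2) / Real.log 2)
            - q c * (Real.log (q c) / Real.log 2)
          = q c * (Real.log (prob p X c.1) + Real.log (prob p Y c.2) - Real.log (q c))
              / Real.log 2 := by ring
        _ ≤ (prob p X c.1 * prob p Y c.2 - q c) / Real.log 2 := by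
            apply div_le_div_of_nonneg_right hineq hlog2.le
  have hsum1 : ∑ c : α × β, q c = 1 := by
    rw [hq, sum_prob p (fun ω => (X ω, Y ω)), hp1]
  have hsum2 : ∑ c : α × β, prob p X c.1 * prob p Y c.2 = 1 := by
    rw [Fintype.sum_prod_type]
    simp_rw [← Finset.mul_sum]
    rw [← Finset.sum_mul, sum_prob p X, sum_prob p Y, hp1, one_mul]
  have hbig : ∑ c : α × β, (q c * Real.logb 2 (prob p X c.1) + q c * Real.logb 2 (prob p Y c.2)
      - q c * Real.logb 2 (q c)) ≤ 0 := by
    calc ∑ c : α × β, (q c * Real.logb 2 (prob p X c.1) + q c * Real.logb 2 (prob p Y c.2)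
          - q c * Real.logb 2 (q c))
        ≤ ∑ c : α × β, (prob p X c.1 * prob p Y c.2 - q c) / Real.log 2 :=
          Finset.sum_le_sum fun c _ => key c
      _ = (∑ c : α × β, (prob p X c.1 * prob p Y c.2 - q c)) / Real.log 2 := by
          rw [Finset.sum_div]
      _ = 0 := by rw [Finset.sum_sub_distrib, hsum1, hsum2]; simp
  rw [Finset.sum_sub_distrib, Finset.sum_add_distrib] at hbig
  unfold ent
  simp only [← hq]
  rw [expandA, expandB]
  linarith [hbig]

end aux

/-- In an `(m,n)` non-perfect secret sharing scheme, each share has size at least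
`H(W)/(n-m)` bits: if each share has entropy at most `L`, any `m` shares give no
information about the secret `W`, and all `n` shares determine `W`, then `L ≥ H(W)/(n-m)`. -/
theorem secret_sharing_share_size {Ω σ τ : Type*} [Fintype Ω]
    [Fintype σ] [DecidableEq σ] [Fintype τ] [DecidableEq τ]
    (p : Ω → ℝ) (hp0 : ∀ ω, 0 ≤ p ω) (hp1 : ∑ ω, p ω = 1)
    (n m : ℕ) (hmn : m < n) (W : Ω → τ) (S : Fin n → Ω → σ) (L : ℝ)
    (hL : ∀ i, ent p (S i) ≤ L)
    (hsecrecy : ∀ M : Finset (Fin n), M.card ≤ m →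
      mutInfo p W (fun ω => (fun i : M => S i ω)) = 0)
    (hrecovery : condEnt p W (fun ω => (fun i => S i ω)) = 0) :
    L ≥ ent p W / ((n : ℝ) - (m : ℝ)) := by
  classical
  set M : Finset (Fin n) := Finset.univ.filter (fun i => (i : ℕ) < m) with hM
  have hMcard : M.card = m := by
    have : M = Finset.map (Fin.castLEEmb hmn.le) Finset.univ := by
      ext i
      simp only [hM, Finset.mem_filter, Finset.mem_univ, true_and, Finset.mem_map,
        Fin.castLEEmb_apply]
      constructor
      · intro h; exact ⟨⟨i, h⟩, rfl⟩
      · rintro ⟨j, rfl⟩; exact j.2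
    rw [this, Finset.card_map, Finset.card_univ, Fintype.card_fin]
  set g : Finset (Fin n) → ℝ := fun T => ent p (fun ω => fun i : T => S i ω) with hg
  -- step lemma
  have hstep : ∀ (j : Fin n) (T : Finset (Fin n)), g (insert j T) ≤ ent p (S j) + g T := by
    intro j T
    have hc := ent_comp_le p hp0
      (f := fun xt : σ × ({x // x ∈ T} → σ) =>
        (fun i : {x // x ∈ insert j T} => if h : i.1 ∈ T then xt.2 ⟨i.1, h⟩ else xt.1))
      (X := fun ω => (S j ω, fun i : T => S i ω))
    have hE : (fun ω => (fun i : {x // x ∈ insert j T} =>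
        if h : i.1 ∈ T then S i.1 ω else S j ω)) = (fun ω => fun i : {x // x ∈ insert j T} => S i ω) := by
      funext ω
      funext i
      by_cases h : i.1 ∈ T
      · simp [h]
      · have hij : i.1 = j := by
          rcases Finset.mem_insert.1 i.2 with h' | h'
          · exact h'
          · exact absurd h' h
        simp [h, hij]
    rw [hE] at hc
    exact le_trans hc (ent_pair_le p hp0 hp1 _ _)
  have hchain : ∀ R : Finset (Fin n), g (M ∪ R) ≤ g M + ∑ i ∈ R, ent p (S i) := by
    intro R
    induction R using Finset.induction_on with
    | empty => simp
    | @insert j R hj ih =>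
      rw [Finset.union_insert, Finset.sum_insert hj]
      calc g (insert j (M ∪ R)) ≤ ent p (S j) + g (M ∪ R) := hstep j (M ∪ R)
        _ ≤ ent p (S j) + (g M + ∑ i ∈ R, ent p (S i)) := by linarith [ih]
        _ = g M + (ent p (S j) + ∑ i ∈ R, ent p (S i)) := by ring
  have huniv : ent p (fun ω => fun i : Fin n => S i ω) = g Finset.univ := by
    apply le_antisymm
    · exact ent_comp_le p hp0
        (f := fun t : ({x // x ∈ (Finset.univ : Finset (Fin n))} → σ) =>
          (fun i : Fin n => t ⟨i, Finset.mem_univ i⟩))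
        (X := fun ω => fun i : (Finset.univ : Finset (Fin n)) => S i ω)
    · exact ent_comp_le p hp0
        (f := fun s : (Fin n → σ) => fun i : (Finset.univ : Finset (Fin n)) => s i.1)
        (X := fun ω => fun i : Fin n => S i ω)
  have h1 : ent p (fun ω => (W ω, fun i : M => S i ω))
      = ent p W + ent p (fun ω => fun i : M => S i ω) := by
    have hs := hsecrecy M (le_of_eq hMcard)
    unfold mutInfo at hs
    linarith
  have h2 : ent p (fun ω => (W ω, fun i : M => S i ω))
      ≤ ent p (fun ω => (W ω, fun i : Fin n => S i ω)) :=
    ent_comp_le p hp0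
      (f := fun ws : τ × (Fin n → σ) => (ws.1, fun i : M => ws.2 i))
      (X := fun ω => (W ω, fun i : Fin n => S i ω))
  have h3 : ent p (fun ω => (W ω, fun i : Fin n => S i ω))
      = ent p (fun ω => fun i : Fin n => S i ω) := by
    unfold condEnt at hrecovery
    linarith
  have h4 : g Finset.univ ≤ g M + ∑ i ∈ Mᶜ, ent p (S i) := by
    have := hchain Mᶜ
    rwa [Finset.union_compl] at this
  have h5 : ∑ i ∈ Mᶜ, ent p (S i) ≤ ((n - m : ℕ) : ℝ) * L := by
    have hcard : Mᶜ.card = n - m := by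
      rw [Finset.card_compl, hMcard, Fintype.card_fin]
    calc ∑ i ∈ Mᶜ, ent p (S i) ≤ Mᶜ.card • L :=
          Finset.sum_le_card_nsmul _ _ _ (fun i _ => hL i)
      _ = ((n - m : ℕ) : ℝ) * L := by rw [hcard, nsmul_eq_mul]
  have hW : ent p W ≤ ((n - m : ℕ) : ℝ) * L := by linarith
  have hnm : ((n - m : ℕ) : ℝ) = (n : ℝ) - (m : ℝ) := by
    push_cast [Nat.cast_sub hmn.le]
    ring
  rw [hnm] at hW
  have hpos : (0 : ℝ) < (n : ℝ) - (m : ℝ) := by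
    have : (m : ℝ) < (n : ℝ) := by exact_mod_cast hmn
    linarith
  rw [ge_iff_le, div_le_iff₀ hpos]
  linarith [mul_comm L ((n : ℝ) - (m : ℝ))]
end

section
/- Linear non-perfect secret sharing via a Cauchy matrix leaks nothing from m shares: let A be an n × n Cauchy matrix over a finite field F_q (q ≥ 2n), n = (n-m) + m. Let the secret be w ∈ F_q^{n-m} (arbitrary) and let the keys y ∈ F_q^m be uniformly random. Define shares s = A · (w, y)ᵀ ∈ F_q^n. Then for any set of m share indices L ⊆ [n], the vector (s_l)_{l∈L} is uniformly distributed on F_q^m independently of w; equivalently, for any nonzero row vector h ∈ F_q^m acting on the selected shares, h·A₂ = 0 and h·A₁ ≠ 0 cannot simultaneously hold, where A₁, A₂ are the m×(n-m) and m×m submatrices of A restricted to rows L and the first n-m (resp. last m) columns. -/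
open Polynomial in
/-- A vector in the left kernel of a Cauchy matrix is zero. -/
lemma cauchy_left_kernel {F : Type*} [Field F] {m : ℕ}
    (a b : Fin m → F) (ha : Function.Injective a) (hb : Function.Injective b)
    (hab : ∀ i j, a i ≠ b j) (h : Fin m → F)
    (hz : ∀ j, ∑ i, h i * (a i - b j)⁻¹ = 0) : h = 0 := by
  rcases Nat.eq_zero_or_pos m with hm | hm
  · subst hm; funext i; exact i.elim0
  classical
  set P : F[X] := ∑ i, C (h i) * ∏ l ∈ Finset.univ.erase i, (C (a l) - X) with hP
  have hdeg : P.natDegree < m := by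
    have : P.natDegree ≤ m - 1 := by
      refine Polynomial.natDegree_sum_le_of_forall_le _ _ (fun i _ => ?_)
      refine le_trans (Polynomial.natDegree_C_mul_le _ _) ?_
      refine le_trans (Polynomial.natDegree_prod_le _ _) ?_
      calc ∑ l ∈ Finset.univ.erase i, (C (a l) - X).natDegree
          ≤ ∑ l ∈ Finset.univ.erase i, 1 := by
            refine Finset.sum_le_sum (fun l _ => ?_)
            have : C (a l) - X = -(X - C (a l)) := by ring
            rw [this, Polynomial.natDegree_neg, Polynomial.natDegree_X_sub_C]
        _ = m - 1 := by
            rw [Finset.sum_const, smul_eq_mul, mul_one, Finset.card_erase_of_mem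
              (Finset.mem_univ i), Finset.card_univ, Fintype.card_fin]
    omega
  have hevalP : ∀ j, P.eval (b j) = ∑ i, h i * ∏ l ∈ Finset.univ.erase i, (a l - b j) := by
    intro j; simp [hP, Polynomial.eval_finset_sum, Polynomial.eval_prod]
  have hPzero : P = 0 := by
    refine Polynomial.eq_zero_of_natDegree_lt_card_of_eval_eq_zero P hb (fun j => ?_)
      (by simpa using hdeg)
    rw [hevalP]
    have key : ∀ i : Fin m,
        h i * ∏ l ∈ Finset.univ.erase i, (a l - b j)
        = (h i * (a i - b j)⁻¹) * ∏ l, (a l - b j) := by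
      intro i
      rw [← Finset.mul_prod_erase Finset.univ _ (Finset.mem_univ i)]
      field_simp [sub_ne_zero.mpr (hab i j)]
    rw [Finset.sum_congr rfl (fun i _ => key i), ← Finset.sum_mul, hz j, zero_mul]
  funext i
  show h i = 0
  have heval : P.eval (a i) = h i * ∏ l ∈ Finset.univ.erase i, (a l - a i) := by
    rw [hP]
    simp only [Polynomial.eval_finset_sum, Polynomial.eval_mul, Polynomial.eval_C,
      Polynomial.eval_prod, Polynomial.eval_sub, Polynomial.eval_X]
    rw [Finset.sum_eq_single i]
    · intro i' _ hne
      have : (a i - a i) = 0 := sub_self _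
      rw [Finset.prod_eq_zero (Finset.mem_erase.mpr ⟨Ne.symm hne, Finset.mem_univ i⟩) this,
        mul_zero]
    · intro hni; exact absurd (Finset.mem_univ i) hni
  rw [hPzero, Polynomial.eval_zero] at heval
  have hprod : ∏ l ∈ Finset.univ.erase i, (a l - a i) ≠ 0 := by
    refine Finset.prod_ne_zero_iff.mpr (fun l hl => ?_)
    exact sub_ne_zero.mpr (fun e => (Finset.mem_erase.mp hl).1 (ha e))
  rcases mul_eq_zero.mp heval.symm with h0 | h0
  · exact h0
  · exact absurd h0 hprod

/-- Linear non-perfect secret sharing via a Cauchy matrix leaks nothing from `m` shares.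
Let `A` be an `n × n` Cauchy matrix over a finite field `F` with `|F| ≥ 2n`, where
`n = k + m` (`k = n - m` secret symbols, `m` uniform keys). For any injective selection
`L` of `m` share indices, writing `A₁`, `A₂` for the `m × k` and `m × m` submatrices of `A`
with rows `L` and the first `k` (resp. last `m`) columns:
(i) for every secret `w`, the map from keys `y` to the selected shares
`(A₁ w + A₂ y)` is a bijection of `F^m` (so the `m` selected shares are uniformly
distributed, independently of `w`); equivalently,
(ii) there is no nonzero row vector `h` with `h ⬝ A₂ = 0` and `h ⬝ A₁ ≠ 0`. -/
theorem cauchy_secret_sharing_no_leak {F : Type*} [Field F] [Fintype F]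
    {k m : ℕ}
    (x y : Fin (k + m) → F)
    (hx : Function.Injective x) (hy : Function.Injective y)
    (hxy : ∀ i j, x i ≠ y j)
    (hq : 2 * (k + m) ≤ Fintype.card F)
    (A : Matrix (Fin (k + m)) (Fin (k + m)) F)
    (hA : A = Matrix.of fun i j => (x i - y j)⁻¹)
    (L : Fin m → Fin (k + m)) (hL : Function.Injective L) :
    -- the m×k and m×m submatrices
    let A₁ : Matrix (Fin m) (Fin k) F := Matrix.of fun i j => A (L i) (Fin.castAdd m j)
    let A₂ : Matrix (Fin m) (Fin m) F := Matrix.of fun i j => A (L i) (Fin.natAdd k j)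
    (∀ w : Fin k → F,
      Function.Bijective (fun y : Fin m → F =>
        (A₁.mulVec w + A₂.mulVec y : Fin m → F))) ∧
    (∀ h : Fin m → F, h ≠ 0 →
      ¬ (Matrix.vecMul h A₂ = 0 ∧ Matrix.vecMul h A₁ ≠ 0)) := by
  intro A₁ A₂
  have hker : ∀ h : Fin m → F, Matrix.vecMul h A₂ = 0 → h = 0 := by
    intro h hz
    refine cauchy_left_kernel (fun i => x (L i)) (fun j => y (Fin.natAdd k j))
      (fun i j e => hL (hx e)) (fun i j e => by
        have h2 := congrArg Fin.val (hy e)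
        simp only [Fin.natAdd, Fin.mk.injEq] at h2
        exact Fin.ext (by omega))
      (fun i j => hxy (L i) (Fin.natAdd k j)) h (fun j => ?_)
    have h1 : ∑ i, h i * A₂ i j = 0 := by
      simpa [Matrix.vecMul, dotProduct, mul_comm] using congrFun hz j
    simpa [A₂, hA] using h1
  have hdet : A₂.det ≠ 0 := by
    intro hd
    obtain ⟨v, hv, hv0⟩ := (Matrix.exists_vecMul_eq_zero_iff (M := A₂)).mpr hd
    exact hv (hker v hv0)
  constructor
  · intro w
    have hinj : Function.Injective (fun y : Fin m → F =>
        (A₁.mulVec w + A₂.mulVec y : Fin m → F)) := by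
      intro y₁ y₂ he
      have h2 : A₂.mulVec y₁ = A₂.mulVec y₂ := by
        have := he
        simpa [add_right_inj] using this
      have hz : A₂.mulVec (y₁ - y₂) = 0 := by
        rw [Matrix.mulVec_sub, h2, sub_self]
      by_contra hne
      have : ∃ v, v ≠ 0 ∧ A₂.mulVec v = 0 := ⟨y₁ - y₂, sub_ne_zero.mpr hne, hz⟩
      exact hdet ((Matrix.exists_mulVec_eq_zero_iff (M := A₂)).mp this)
    exact (Finite.injective_iff_bijective).mp hinj
  · intro h hne ⟨hz, _⟩
    exact hne (hker h hz)
end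

section
/- The array B in the t-design HpPDA construction is a valid PDA: fix t ≥ 2 and integers a_s ≥ 0 for 1 ≤ s ≤ t-1. Rows are indexed by pairs (Y,i) with Y a nonempty proper subset of [t] of size s ∈ [1,t-1] and i ∈ [a_s]; columns by j ∈ [t]. Define B((Y,i),j) = * if j ∈ Y and B((Y,i),j) = (Y ∪ {j}, i) if j ∉ Y. Then: (1) each column contains exactly Σ_s a_s C(t-1,s-1) stars; (2) any two equal non-star entries (Y₁∪{j₁},i) = (Y₂∪{j₂},i) with (Y₁,j₁) ≠ (Y₂,j₂) satisfy Y₁ ≠ Y₂, j₁ ≠ j₂, j₂ ∈ Y₁, and j₁ ∈ Y₂ (so the cross positions are stars). -/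
open Finset

lemma count_sets_through (t : ℕ) (j : Fin t) (s : ℕ) (hs : 1 ≤ s) :
    ((Finset.univ : Finset (Finset (Fin t))).filter
      (fun Y => j ∈ Y ∧ Y.card = s)).card = Nat.choose (t - 1) (s - 1) := by
  have h : ((Finset.univ : Finset (Fin t)).erase j).card = t - 1 := by
    simp [Finset.card_erase_of_mem]
  rw [← h, ← Finset.card_powersetCard]
  apply Finset.card_bij (fun Y _ => Y.erase j)
  · intro Y hY
    simp only [mem_filter, mem_univ, true_and] at hY
    simp only [mem_powersetCard]
    constructor
    · intro x hx
      simp only [mem_erase] at hx ⊢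
      exact ⟨hx.1, mem_univ x⟩
    · rw [Finset.card_erase_of_mem hY.1, hY.2]
  · intro Y₁ h₁ Y₂ h₂ he
    simp only [mem_filter, mem_univ, true_and] at h₁ h₂
    have : insert j (Y₁.erase j) = insert j (Y₂.erase j) := by rw [he]
    rwa [Finset.insert_erase h₁.1, Finset.insert_erase h₂.1] at this
  · intro Z hZ
    simp only [mem_powersetCard] at hZ
    refine ⟨insert j Z, ?_, ?_⟩
    · have hjZ : j ∉ Z := fun h => by
        have := hZ.1 h; simp at this
      simp only [mem_filter, mem_univ, true_and]
      refine ⟨mem_insert_self _ _, ?_⟩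
      rw [Finset.card_insert_of_notMem hjZ, hZ.2]
      omega
    · have hjZ : j ∉ Z := fun h => by
        have := hZ.1 h; simp at this
      rw [Finset.erase_insert hjZ]

/-- The array `B` of the `t`-design HpPDA construction is a valid PDA. -/
theorem tdesign_B_is_PDA (t : ℕ) (ht : 2 ≤ t) (a : ℕ → ℕ) :
    (∀ j : Fin t,
      (∑ Y ∈ (Finset.univ : Finset (Finset (Fin t))).filter
          (fun Y => j ∈ Y ∧ 1 ≤ Y.card ∧ Y.card ≤ t - 1), a Y.card)
        = ∑ s ∈ Finset.Icc 1 (t - 1), a s * Nat.choose (t - 1) (s - 1)) ∧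
    (∀ (Y₁ Y₂ : Finset (Fin t)) (j₁ j₂ : Fin t),
      1 ≤ Y₁.card → Y₁.card ≤ t - 1 → 1 ≤ Y₂.card → Y₂.card ≤ t - 1 →
      j₁ ∉ Y₁ → j₂ ∉ Y₂ → (Y₁, j₁) ≠ (Y₂, j₂) →
      insert j₁ Y₁ = insert j₂ Y₂ →
      Y₁ ≠ Y₂ ∧ j₁ ≠ j₂ ∧ j₂ ∈ Y₁ ∧ j₁ ∈ Y₂) := by
  constructor
  · intro j
    have key := Finset.sum_fiberwise_eq_sum_filter
      ((Finset.univ : Finset (Finset (Fin t))).filter (fun Y => j ∈ Y))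
      (Finset.Icc 1 (t - 1)) (fun Y => Y.card) (fun Y => a Y.card)
    have hlhs : ((Finset.univ : Finset (Finset (Fin t))).filter
          (fun Y => j ∈ Y)).filter (fun Y => Y.card ∈ Finset.Icc 1 (t-1))
        = (Finset.univ : Finset (Finset (Fin t))).filter
          (fun Y => j ∈ Y ∧ 1 ≤ Y.card ∧ Y.card ≤ t - 1) := by
      rw [Finset.filter_filter]
      apply Finset.filter_congr
      intro Y _
      simp [Finset.mem_Icc, and_assoc]
    rw [hlhs] at key
    rw [← key]
    apply Finset.sum_congr rfl
    intro s hs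
    simp only [Finset.mem_Icc] at hs
    have h1 : ((Finset.univ : Finset (Finset (Fin t))).filter
        (fun Y => j ∈ Y)).filter (fun Y => Y.card = s)
        = (Finset.univ : Finset (Finset (Fin t))).filter
          (fun Y => j ∈ Y ∧ Y.card = s) := by
      rw [Finset.filter_filter]
    rw [h1]
    rw [Finset.sum_congr rfl (fun Y hY => by
      simp only [Finset.mem_filter] at hY
      rw [hY.2.2])]
    rw [Finset.sum_const, smul_eq_mul, count_sets_through t j s hs.1, mul_comm]
  · intro Y₁ Y₂ j₁ j₂ _ _ _ _ h₁ h₂ hne hins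
    have hjj : j₁ ≠ j₂ := by
      intro h
      subst h
      apply hne
      have : Y₁ = Y₂ := by
        ext x
        constructor
        · intro hx
          have : x ∈ insert j₁ Y₂ := hins ▸ mem_insert_of_mem hx
          rcases Finset.mem_insert.1 this with h | h
          · exact absurd (h ▸ hx) h₁
          · exact h
        · intro hx
          have : x ∈ insert j₁ Y₁ := hins ▸ mem_insert_of_mem hx
          rcases Finset.mem_insert.1 this with h | h
          · exact absurd (h ▸ hx) h₂
          · exact h
      rw [this]
    have hj₂Y₁ : j₂ ∈ Y₁ := by
      have : j₂ ∈ insert j₁ Y₁ := hins ▸ mem_insert_self j₂ Y₂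
      rcases Finset.mem_insert.1 this with h | h
      · exact absurd h.symm hjj
      · exact h
    have hj₁Y₂ : j₁ ∈ Y₂ := by
      have : j₁ ∈ insert j₂ Y₂ := hins ▸ mem_insert_self j₁ Y₁
      rcases Finset.mem_insert.1 this with h | h
      · exact absurd h hjj
      · exact h
    exact ⟨fun h => h₂ (h ▸ hj₂Y₁), hjj, hj₂Y₁, hj₁Y₂⟩
end
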